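/- arXiv:1311.5769 — 3 statements merged into one kernel-verified Lean document; each statement's English description precedes it below -/
import Mathlib

section
/- Let a, b, c be elements of a commutative ring and n ≥ 2 a natural number. Then P_{n,0}, the total weight of all step sequences of length n−1 which, started at height 1, have height ≥ 1 after each of the first n−2 steps and height 0 after the final step, equals ∑_{i=0}^{⌊(n−2)/2⌋} C(n−2, 2i)·Cat(i)·a^{i}·b^{n−2−2i}·c^{i+1}, where Cat(i) = C(2i, i) − C(2i, i−1) is the i-th Catalan number. -/
/-!
A path from height `1` that stays at height `≥ 1` and first reaches `0` at its last step is a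
Motzkin path, lifted by one, followed by a down step; so `P_{n,0} = c · M(n - 2, 0)`, where
`M(m, k)` is the total weight of the Motzkin paths of length `m` from `0` to `k`. Splitting off
the last step gives `M(m + 1, k) = a M(m, k - 1) + b M(m, k) + c M(m, k + 1)`, and by Pascal's rule
the same recurrence holds for `∑_d C(m, 2d + k) B(k, d) a^(d + k) b^(m - 2d - k) c^d`, where
`B(k, d)` is a ballot number. At `k = 0` the ballot number `B(0, d)` is the Catalan number.
-/

open Finset

/-- The step sequences of length `L`: functions `Fin L → ℤ` with every value in `{1, 0, -1}`. -/
def stepSeqs (L : ℕ) : Finset (Fin L → ℤ) :=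
  Fintype.piFinset fun _ => ({1, 0, -1} : Finset ℤ)

/-- The weight of a step sequence: `a ^ (#up steps) * b ^ (#flat steps) * c ^ (#down steps)`. -/
def seqWeight {R : Type*} [CommRing R] (a b c : R) {L : ℕ} (s : Fin L → ℤ) : R :=
  a ^ (Finset.univ.filter (fun i => s i = 1)).card *
    b ^ (Finset.univ.filter (fun i => s i = 0)).card *
      c ^ (Finset.univ.filter (fun i => s i = -1)).card

/-- The height of a step sequence after `i` steps, started at height `h`. -/
def seqHeight {L : ℕ} (h : ℤ) (s : Fin L → ℤ) (i : ℕ) : ℤ :=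
  h + ∑ j ∈ Finset.univ.filter (fun j : Fin L => (j : ℕ) < i), s j

section StepSequences

variable {R : Type*} [CommRing R] (a b c : R) {m : ℕ}

lemma stepSeqs_succ (m : ℕ) :
    stepSeqs (m + 1) =
      (({1, 0, -1} : Finset ℤ) ×ˢ stepSeqs m).map (Fin.snocEquiv fun _ => ℤ).toEmbedding := by
  have := filter_piFinset_eq_map_snocEquiv (fun _ : Fin (m + 1) => ({1, 0, -1} : Finset ℤ))
    fun _ => True
  simp only [filter_true] at this
  exact this

lemma seqHeight_snoc_of_le (h : ℤ) (t : Fin m → ℤ) (v : ℤ) {i : ℕ} (hi : i ≤ m) :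
    seqHeight h (Fin.snoc t v) i = seqHeight h t i := by
  simp only [seqHeight, sum_filter, Fin.sum_univ_castSucc, Fin.snoc_castSucc, Fin.snoc_last,
    Fin.val_castSucc, Fin.val_last]
  simp [show ¬ m < i by omega]

lemma seqHeight_snoc_last (h : ℤ) (t : Fin m → ℤ) (v : ℤ) :
    seqHeight h (Fin.snoc t v) (m + 1) = seqHeight h t m + v := by
  simp only [seqHeight, sum_filter, Fin.sum_univ_castSucc, Fin.snoc_castSucc, Fin.snoc_last,
    Fin.is_lt, if_true]
  ring

lemma seqHeight_init (h : ℤ) (s : Fin (m + 1) → ℤ) {i : ℕ} (hi : i ≤ m) :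
    seqHeight h (Fin.init s) i = seqHeight h s i := by
  conv_rhs => rw [← Fin.snoc_init_self s]
  exact (seqHeight_snoc_of_le h _ _ hi).symm

lemma seqHeight_one (s : Fin m → ℤ) (i : ℕ) : seqHeight 1 s i = 1 + seqHeight 0 s i := by
  simp only [seqHeight, zero_add]

def stepWeight (v : ℤ) : R := if v = 1 then a else if v = 0 then b else c

lemma seqWeight_snoc (t : Fin m → ℤ) {v : ℤ} (hv : v ∈ ({1, 0, -1} : Finset ℤ)) :
    seqWeight a b c (Fin.snoc t v) = seqWeight a b c t * stepWeight a b c v := by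
  simp only [seqWeight, card_filter, Fin.sum_univ_castSucc, Fin.snoc_castSucc, Fin.snoc_last]
  simp only [mem_insert, mem_singleton] at hv
  rcases hv with rfl | rfl | rfl <;> simp [stepWeight, pow_succ] <;> ring

lemma sum_filter_stepSeqs_succ (P : (Fin m → ℤ) → Prop) [DecidablePred P] (h K : ℤ) :
    ∑ s ∈ (stepSeqs (m + 1)).filter (fun s => P (Fin.init s) ∧ seqHeight h s (m + 1) = K),
        seqWeight a b c s =
      ∑ v ∈ ({1, 0, -1} : Finset ℤ), stepWeight a b c v *
        ∑ t ∈ (stepSeqs m).filter (fun t => P t ∧ seqHeight h t m = K - v),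
          seqWeight a b c t := by
  rw [sum_filter, stepSeqs_succ, sum_map, sum_product]
  refine sum_congr rfl fun v hv => ?_
  rw [mul_sum, sum_filter]
  refine sum_congr rfl fun t _ => ?_
  simp only [Fin.snocEquiv, Equiv.coe_toEmbedding, Equiv.coe_fn_mk, Fin.init_snoc,
    seqHeight_snoc_last, seqWeight_snoc a b c t hv, eq_sub_iff_add_eq, mul_comm]

end StepSequences

section MotzkinPaths

variable {R : Type*} [CommRing R] (a b c : R)

def motzkinWeight (m : ℕ) (k : ℤ) : R :=
  ∑ s ∈ (stepSeqs m).filter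
      (fun s => (∀ i ≤ m, 0 ≤ seqHeight 0 s i) ∧ seqHeight 0 s m = k),
    seqWeight a b c s

lemma motzkinWeight_zero (k : ℤ) : motzkinWeight a b c 0 k = if k = 0 then 1 else 0 := by
  have hheight (s : Fin 0 → ℤ) (i : ℕ) : seqHeight 0 s i = 0 := by simp [seqHeight]
  split_ifs with hk <;> simp [motzkinWeight, hheight, stepSeqs, seqWeight, eq_comm, hk]

lemma motzkinWeight_of_neg {m : ℕ} {k : ℤ} (hk : k < 0) : motzkinWeight a b c m k = 0 := by
  refine sum_eq_zero fun s hs => ?_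
  obtain ⟨hnonneg, hend⟩ := (mem_filter.1 hs).2
  have := hnonneg m le_rfl
  omega

lemma motzkinWeight_succ (m : ℕ) {k : ℤ} (hk : 0 ≤ k) :
    motzkinWeight a b c (m + 1) k =
      a * motzkinWeight a b c m (k - 1) + b * motzkinWeight a b c m k +
        c * motzkinWeight a b c m (k + 1) := by
  have hcond : ∀ s ∈ stepSeqs (m + 1),
      ((∀ i ≤ m + 1, 0 ≤ seqHeight 0 s i) ∧ seqHeight 0 s (m + 1) = k) ↔
        ((∀ i ≤ m, 0 ≤ seqHeight 0 (Fin.init s) i) ∧ seqHeight 0 s (m + 1) = k) := by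
    intro s _
    refine ⟨fun ⟨hs, hend⟩ => ⟨fun i hi => ?_, hend⟩,
      fun ⟨hs, hend⟩ => ⟨fun i hi => ?_, hend⟩⟩
    · rw [seqHeight_init 0 s hi]
      exact hs i (by omega)
    · rcases Nat.lt_or_eq_of_le hi with hi | rfl
      · rw [← seqHeight_init 0 s (by omega)]
        exact hs i (by omega)
      · omega
  rw [motzkinWeight, filter_congr hcond,
    sum_filter_stepSeqs_succ a b c (fun t => ∀ i ≤ m, 0 ≤ seqHeight 0 t i)]
  simp [stepWeight, motzkinWeight, add_assoc]

lemma sum_seqWeight_first_passage (m : ℕ) :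
    ∑ s ∈ (stepSeqs (m + 1)).filter
        (fun s => (∀ i ≤ m, 1 ≤ seqHeight 1 s i) ∧ seqHeight 1 s (m + 1) = 0),
      seqWeight a b c s = c * motzkinWeight a b c m 0 := by
  have hcond : ∀ s ∈ stepSeqs (m + 1),
      ((∀ i ≤ m, 1 ≤ seqHeight 1 s i) ∧ seqHeight 1 s (m + 1) = 0) ↔
        ((∀ i ≤ m, 1 ≤ seqHeight 1 (Fin.init s) i) ∧ seqHeight 1 s (m + 1) = 0) := by
    intro s _
    simp +contextual only [seqHeight_init]
  rw [filter_congr hcond,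
    sum_filter_stepSeqs_succ a b c (fun t => ∀ i ≤ m, 1 ≤ seqHeight 1 t i)]
  -- Before the last step the height is `≥ 1`, so that step goes down from height `1`.
  have hup : ∀ K ≤ (0 : ℤ), (stepSeqs m).filter
      (fun t => (∀ i ≤ m, 1 ≤ seqHeight 1 t i) ∧ seqHeight 1 t m = K) = ∅ :=
    fun K hK => filter_eq_empty_iff.2 fun t _ ⟨ht, hK'⟩ => by have := ht m le_rfl; omega
  have hdown : (stepSeqs m).filter
      (fun t => (∀ i ≤ m, 1 ≤ seqHeight 1 t i) ∧ seqHeight 1 t m = 1) =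
      (stepSeqs m).filter (fun t => (∀ i ≤ m, 0 ≤ seqHeight 0 t i) ∧ seqHeight 0 t m = 0) :=
    filter_congr fun t _ => by simp only [seqHeight_one, le_add_iff_nonneg_right, add_eq_left]
  simp [stepWeight, hup, hdown, motzkinWeight]

end MotzkinPaths

section ClosedForm

/-- The ballot number: by the reflection principle, the number of `±1` paths from height `0`
that stay at height `≥ 0`, take `d` down steps and end at height `k`. -/
def ballot (k d : ℕ) : ℤ := (2 * d + k).choose d - (2 * d + k).choose (d + k + 1)

lemma ballot_zero_right (k : ℕ) : ballot k 0 = 1 := by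
  simp [ballot]

lemma ballot_zero_succ (d : ℕ) : ballot 0 (d + 1) = ballot 1 d := by
  simp only [ballot, show 2 * (d + 1) + 0 = 2 * d + 1 + 1 by ring,
    show d + 1 + 0 + 1 = d + 2 by ring, Nat.choose_succ_succ (2 * d + 1) d,
    Nat.choose_succ_succ (2 * d + 1) (d + 1)]
  push_cast
  ring

lemma ballot_succ_succ (k d : ℕ) :
    ballot (k + 1) (d + 1) = ballot k (d + 1) + ballot (k + 2) d := by
  simp only [ballot, show 2 * (d + 1) + (k + 1) = 2 * d + k + 2 + 1 by ring,
    show 2 * (d + 1) + k = 2 * d + k + 2 by ring, show 2 * d + (k + 2) = 2 * d + k + 2 by ring,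
    show d + 1 + (k + 1) + 1 = d + k + 2 + 1 by ring, show d + 1 + k + 1 = d + k + 2 by ring,
    show d + (k + 2) + 1 = d + k + 3 by ring, Nat.choose_succ_succ (2 * d + k + 2) d,
    Nat.choose_succ_succ (2 * d + k + 2) (d + k + 2)]
  push_cast
  ring

lemma ballot_zero_left (d : ℕ) : ballot 0 d = catalan d := by
  have hcat : ((d : ℤ) + 1) * catalan d = (2 * d).choose d := by
    exact_mod_cast succ_mul_catalan_eq_centralBinom d
  have hchoose : ((2 * d).choose (d + 1) : ℤ) * (d + 1) = (2 * d).choose d * d := by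
    exact_mod_cast (show 2 * d - d = d by omega) ▸ Nat.choose_succ_right_eq (2 * d) d
  refine mul_left_cancel₀ (show (d : ℤ) + 1 ≠ 0 by positivity) ?_
  simp only [ballot, add_zero]
  linear_combination -hcat - hchoose

lemma choose_succ_mul_pow {R : Type*} [CommRing R] (x : R) (m l : ℕ) :
    ((m + 1).choose (l + 1) : R) * x ^ (m - l) =
      x * ((m.choose (l + 1) : R) * x ^ (m - (l + 1))) + (m.choose l : R) * x ^ (m - l) := by
  rw [Nat.choose_succ_succ, Nat.cast_add]
  rcases lt_or_ge l m with hl | hl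
  · rw [show m - l = m - (l + 1) + 1 by omega, pow_succ]
    ring
  · rw [Nat.choose_eq_zero_of_lt (show m < l + 1 by omega)]
    ring

variable {R : Type*} [CommRing R] (a b c : R)

/-- The total weight of the Motzkin prefixes of length `m` ending at height `k` with `d` down
steps: their `2 * d + k` non-flat steps are placed among the `m` steps and form a ballot path. -/
def motzkinTerm (m k d : ℕ) : R :=
  (m.choose (2 * d + k) : R) * b ^ (m - (2 * d + k)) * (ballot k d : R) * a ^ (d + k) * c ^ d

lemma motzkinTerm_eq_zero {m k d : ℕ} (h : m < 2 * d + k) : motzkinTerm a b c m k d = 0 := by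
  simp [motzkinTerm, Nat.choose_eq_zero_of_lt h]

lemma sum_range_motzkinTerm {m k N : ℕ} (hN : m < 2 * N + k) :
    ∑ d ∈ range N, motzkinTerm a b c m k d =
      ∑ d ∈ range (m + 1), motzkinTerm a b c m k d := by
  have hvanish (M : ℕ) (hM : m < 2 * M + k) :
      ∀ d ∈ range (max N (m + 1)), d ∉ range M → motzkinTerm a b c m k d = 0 :=
    fun d _ hd => motzkinTerm_eq_zero a b c (by simp only [mem_range] at hd; omega)
  rw [sum_subset (range_subset_range.2 (le_max_left _ _)) (hvanish N hN),
    sum_subset (range_subset_range.2 (le_max_right _ _)) (hvanish (m + 1) (by omega))]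

lemma motzkinTerm_succ_zero_zero (m : ℕ) :
    motzkinTerm a b c (m + 1) 0 0 = b * motzkinTerm a b c m 0 0 := by
  simp only [motzkinTerm, mul_zero, add_zero, Nat.choose_zero_right, Nat.sub_zero, pow_succ]
  ring

lemma motzkinTerm_succ_zero_succ (m d : ℕ) :
    motzkinTerm a b c (m + 1) 0 (d + 1) =
      b * motzkinTerm a b c m 0 (d + 1) + c * motzkinTerm a b c m 1 d := by
  have := choose_succ_mul_pow b m (2 * d + 1)
  simp only [motzkinTerm, ballot_zero_succ, Nat.add_sub_add_right,
    show 2 * (d + 1) + 0 = 2 * d + 1 + 1 by ring] at this ⊢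
  linear_combination (ballot 1 d : R) * a ^ (d + 1) * c ^ (d + 1) * this

lemma motzkinTerm_succ_succ_zero (m k : ℕ) :
    motzkinTerm a b c (m + 1) (k + 1) 0 =
      a * motzkinTerm a b c m k 0 + b * motzkinTerm a b c m (k + 1) 0 := by
  have := choose_succ_mul_pow b m k
  simp only [motzkinTerm, ballot_zero_right, Nat.add_sub_add_right, mul_zero, zero_add] at this ⊢
  linear_combination a ^ (k + 1) * this

lemma motzkinTerm_succ_succ_succ (m k d : ℕ) :
    motzkinTerm a b c (m + 1) (k + 1) (d + 1) =
      a * motzkinTerm a b c m k (d + 1) + b * motzkinTerm a b c m (k + 1) (d + 1) +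
        c * motzkinTerm a b c m (k + 2) d := by
  have := choose_succ_mul_pow b m (2 * d + k + 2)
  simp only [motzkinTerm, ballot_succ_succ, Nat.add_sub_add_right,
    show 2 * (d + 1) + (k + 1) = 2 * d + k + 2 + 1 by ring,
    show 2 * (d + 1) + k = 2 * d + k + 2 by ring, show 2 * d + (k + 2) = 2 * d + k + 2 by ring]
    at this ⊢
  push_cast
  linear_combination
    ((ballot k (d + 1) : R) + ballot (k + 2) d) * a ^ (d + k + 2) * c ^ (d + 1) * this

lemma sum_motzkinTerm_succ_zero (m : ℕ) :
    ∑ d ∈ range (m + 2), motzkinTerm a b c (m + 1) 0 d =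
      b * ∑ d ∈ range (m + 1), motzkinTerm a b c m 0 d +
        c * ∑ d ∈ range (m + 1), motzkinTerm a b c m 1 d := by
  rw [sum_range_succ', motzkinTerm_succ_zero_zero]
  simp only [motzkinTerm_succ_zero_succ, sum_add_distrib, ← mul_sum]
  rw [← sum_range_motzkinTerm a b c (k := 0) (N := m + 2) (by omega),
    sum_range_succ' (motzkinTerm a b c m 0) (m + 1)]
  ring

lemma sum_motzkinTerm_succ_succ (m k : ℕ) :
    ∑ d ∈ range (m + 2), motzkinTerm a b c (m + 1) (k + 1) d =
      a * ∑ d ∈ range (m + 1), motzkinTerm a b c m k d +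
        b * ∑ d ∈ range (m + 1), motzkinTerm a b c m (k + 1) d +
          c * ∑ d ∈ range (m + 1), motzkinTerm a b c m (k + 2) d := by
  rw [sum_range_succ', motzkinTerm_succ_succ_zero]
  simp only [motzkinTerm_succ_succ_succ, sum_add_distrib, ← mul_sum]
  rw [← sum_range_motzkinTerm a b c (N := m + 2) (k := k) (by omega),
    ← sum_range_motzkinTerm a b c (N := m + 2) (k := k + 1) (by omega),
    sum_range_succ' _ (m + 1), sum_range_succ' (motzkinTerm a b c m (k + 1)) (m + 1)]
  ring

theorem motzkinWeight_eq_sum_motzkinTerm (m k : ℕ) :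
    motzkinWeight a b c m k = ∑ d ∈ range (m + 1), motzkinTerm a b c m k d := by
  induction m generalizing k with
  | zero =>
    cases k <;>
      simp [motzkinWeight_zero, motzkinTerm, ballot_zero_right, Nat.cast_add_one_ne_zero]
  | succ m ih =>
    rw [motzkinWeight_succ a b c m (Int.natCast_nonneg k)]
    cases k with
    | zero =>
      rw [motzkinWeight_of_neg a b c (by omega), sum_motzkinTerm_succ_zero, ← ih, ← ih]
      push_cast
      ring
    | succ k =>
      rw [sum_motzkinTerm_succ_succ, ← ih, ← ih, ← ih]
      push_cast
      ring_nf

end ClosedForm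

/-- `P_{n,0}`, the total weight of step sequences of length `n-1` started at
height `1`, staying at height `≥ 1` for the first `n-2` steps, and ending at height `0`,
equals the weighted Motzkin number `∑_i C(n-2, 2i) ⬝ Cat(i) ⬝ a^i b^(n-2-2i) c^(i+1)`. -/
theorem weighted_paths_ruin {R : Type*} [CommRing R] (a b c : R) (n : ℕ) (hn : 2 ≤ n) :
    (∑ s ∈ (stepSeqs (n - 1)).filter
        (fun s => (∀ i ≤ n - 2, 1 ≤ seqHeight 1 s i) ∧ seqHeight 1 s (n - 1) = 0),
      seqWeight a b c s)
      = ∑ i ∈ Finset.range ((n - 2) / 2 + 1),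
          (Nat.choose (n - 2) (2 * i) : R) * (catalan i : R) *
            a ^ i * b ^ (n - 2 - 2 * i) * c ^ (i + 1) := by
  obtain ⟨m, rfl⟩ : ∃ m, n = m + 2 := ⟨n - 2, by omega⟩
  rw [show m + 2 - 1 = m + 1 by omega, show m + 2 - 2 = m by omega,
    sum_seqWeight_first_passage, ← Nat.cast_zero, motzkinWeight_eq_sum_motzkinTerm,
    ← sum_range_motzkinTerm a b c (N := m / 2 + 1) (by omega), mul_sum]
  refine sum_congr rfl fun d _ => ?_
  simp only [motzkinTerm, ballot_zero_left, add_zero]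
  push_cast
  ring
end

section
/- Let μ0 ∈ [0, 1]. For natural numbers i ≥ 1, k > i and n ≥ 1, define P(i, k, n) = ∑ over strictly increasing sequences i = i_0 < i_1 < ⋯ < i_{n−1} ≤ k−1 (with i_n := k) of [∏_{j=1}^{n} ∏_{d=i_{j−1}+1}^{i_j − 1} (1 − j·μ0/d)] · [∏_{j=1}^{n−1} (j·μ0 / i_j)]; for n = 1 the sum has the single empty sequence and P(i, k, 1) = ∏_{d=i+1}^{k−1} (1 − μ0/d). Then for all n ≥ 2 and all k ≥ i + 2: P(i, k, n) = P(i, k−1, n) · (1 − n·μ0/(k−1)) + P(i, k−1, n−1) · ((n−1)·μ0/(k−1)), where P(i, k', n') = 0 whenever k' < i + n'. -/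
/-!
Split the sequences `i = i₀ < ⋯ < i_{n-1} < i_n = k` according to the last growth time
`i_{n-1}`. Dropping the final entry `k` leaves a strictly increasing sequence with entries
below `k`. If `i_{n-1} = k - 1`, this is a sequence for `P(i, k-1, n-1)`, and the two weights
differ by the last growth factor `(n-1)μ0/(k-1)` alone, since the final waiting interval is empty.
If `i_{n-1} < k - 1`, replacing the final entry `k` by `k - 1` gives a sequence for
`P(i, k-1, n)`, and the weights differ only by the waiting factor `1 - nμ0/(k-1)` at `d = k - 1`.
-/

open Finset

/-- `clonePstat μ0 i k n`: the probability that a clone born as a single cell at the `i`-th cell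
division contains exactly `n` cells when the colony has `k` cells.  The strictly increasing
sequences `i = i₀ < i₁ < ⋯ < i_{n-1} ≤ k-1` with `i_n := k` are encoded as strictly monotone
functions `f : Fin (n+1) → ℕ` with `f 0 = i` and `f n = k`. -/
noncomputable def clonePstat (μ0 : ℝ) (i k n : ℕ) : ℝ :=
  ∑ f ∈ (Fintype.piFinset (fun _ : Fin (n + 1) => Finset.range (k + 1))).filter
      (fun f => StrictMono f ∧ f 0 = i ∧ f (Fin.last n) = k),
    (∏ j ∈ Finset.univ.filter (fun j : Fin (n + 1) => 1 ≤ (j : ℕ)),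
        ∏ d ∈ Finset.Icc (f (j - 1) + 1) (f j - 1),
          (1 - ((j : ℕ) : ℝ) * μ0 / (d : ℝ))) *
      (∏ j ∈ Finset.univ.filter (fun j : Fin (n + 1) => 1 ≤ (j : ℕ) ∧ (j : ℕ) ≤ n - 1),
        ((j : ℕ) : ℝ) * μ0 / ((f j : ℕ) : ℝ))

def cloneSeqs (i k n : ℕ) : Finset (Fin (n + 1) → ℕ) :=
  (Fintype.piFinset fun _ : Fin (n + 1) => range (k + 1)).filter
    fun f => StrictMono f ∧ f 0 = i ∧ f (Fin.last n) = k

def clonePrefixes (i k n : ℕ) : Finset (Fin (n + 1) → ℕ) :=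
  (Fintype.piFinset fun _ : Fin (n + 1) => range k).filter fun f => StrictMono f ∧ f 0 = i

noncomputable def cloneWaitFactor (μ0 : ℝ) (n : ℕ) (f : Fin (n + 1) → ℕ) : ℝ :=
  ∏ j ∈ univ.filter (fun j : Fin (n + 1) => 1 ≤ (j : ℕ)),
    ∏ d ∈ Icc (f (j - 1) + 1) (f j - 1), (1 - ((j : ℕ) : ℝ) * μ0 / (d : ℝ))

noncomputable def cloneGrowthFactor (μ0 : ℝ) (n : ℕ) (f : Fin (n + 1) → ℕ) : ℝ :=
  ∏ j ∈ univ.filter (fun j : Fin (n + 1) => 1 ≤ (j : ℕ) ∧ (j : ℕ) ≤ n - 1),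
    ((j : ℕ) : ℝ) * μ0 / ((f j : ℕ) : ℝ)

noncomputable def cloneWeight (μ0 : ℝ) (n : ℕ) (f : Fin (n + 1) → ℕ) : ℝ :=
  cloneWaitFactor μ0 n f * cloneGrowthFactor μ0 n f

theorem clonePstat_eq_sum (μ0 : ℝ) (i k n : ℕ) :
    clonePstat μ0 i k n = ∑ f ∈ cloneSeqs i k n, cloneWeight μ0 n f := rfl

theorem Fin.strictMono_snoc_iff {α : Type*} [Preorder α] {n : ℕ} {g : Fin (n + 1) → α}
    {c : α} :
    StrictMono (Fin.snoc g c : Fin (n + 2) → α) ↔ StrictMono g ∧ g (Fin.last n) < c := by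
  simp only [Fin.strictMono_iff_lt_succ (n := n + 1), Fin.forall_fin_succ' (n := n),
    Fin.strictMono_iff_lt_succ (f := g)]
  simp [← Fin.castSucc_succ, Fin.snoc_castSucc, Fin.snoc_last]

theorem mem_cloneSeqs {i k n : ℕ} {f : Fin (n + 1) → ℕ} :
    f ∈ cloneSeqs i k n ↔ StrictMono f ∧ f 0 = i ∧ f (Fin.last n) = k := by
  simp only [cloneSeqs, mem_filter, Fintype.mem_piFinset, mem_range, Nat.lt_succ_iff]
  exact ⟨fun h => h.2, fun h => ⟨fun j => h.2.2 ▸ h.1.monotone (Fin.le_last j), h⟩⟩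

theorem mem_clonePrefixes {i k n : ℕ} {f : Fin (n + 1) → ℕ} :
    f ∈ clonePrefixes i k n ↔ StrictMono f ∧ f 0 = i ∧ f (Fin.last n) < k := by
  simp only [clonePrefixes, mem_filter, Fintype.mem_piFinset, mem_range]
  constructor
  · rintro ⟨hlt, hf, h0⟩
    exact ⟨hf, h0, hlt _⟩
  · rintro ⟨hf, h0, hlt⟩
    exact ⟨fun j => (hf.monotone (Fin.le_last j)).trans_lt hlt, hf, h0⟩

theorem snoc_mem_cloneSeqs {i k n c : ℕ} {g : Fin (n + 1) → ℕ} :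
    (Fin.snoc g c : Fin (n + 2) → ℕ) ∈ cloneSeqs i k (n + 1) ↔
      g ∈ clonePrefixes i c n ∧ c = k := by
  rw [mem_cloneSeqs, mem_clonePrefixes, Fin.strictMono_snoc_iff, ← Fin.castSucc_zero,
    Fin.snoc_castSucc, Fin.snoc_last]
  tauto

theorem sum_cloneSeqs_succ {M : Type*} [AddCommMonoid M] (i k n : ℕ)
    (F : (Fin (n + 2) → ℕ) → M) :
    ∑ f ∈ cloneSeqs i k (n + 1), F f =
      ∑ g ∈ clonePrefixes i k n, F (Fin.snoc g k : Fin (n + 2) → ℕ) := by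
  have snoc_init {f} (hf : f ∈ cloneSeqs i k (n + 1)) : Fin.snoc (Fin.init f) k = f := by
    rw [← (mem_cloneSeqs.1 hf).2.2, Fin.snoc_init_self]
  refine sum_nbij' Fin.init (fun g => Fin.snoc g k) (fun f hf => ?_) (fun g hg => ?_)
    (fun f hf => ?_) (fun g _ => Fin.init_snoc _ _) (fun f hf => ?_)
  · rw [← Fin.snoc_init_self f, snoc_mem_cloneSeqs] at hf
    exact hf.2 ▸ hf.1
  · exact snoc_mem_cloneSeqs.2 ⟨hg, rfl⟩
  · exact snoc_init hf
  · rw [snoc_init hf]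

theorem filter_clonePrefixes_succ_lt (i k n : ℕ) :
    (clonePrefixes i (k + 1) n).filter (fun g => g (Fin.last n) < k) = clonePrefixes i k n := by
  ext g
  simp only [mem_filter, mem_clonePrefixes, and_assoc]
  exact and_congr_right' <| and_congr_right' <| by omega

theorem filter_clonePrefixes_succ_not_lt (i k n : ℕ) :
    (clonePrefixes i (k + 1) n).filter (fun g => ¬ g (Fin.last n) < k) = cloneSeqs i k n := by
  ext g
  simp only [mem_filter, mem_clonePrefixes, mem_cloneSeqs, and_assoc]
  exact and_congr_right' <| and_congr_right' <| by omega

theorem cloneWaitFactor_eq (μ0 : ℝ) (n : ℕ) (f : Fin (n + 1) → ℕ) :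
    cloneWaitFactor μ0 n f = ∏ j : Fin n,
      ∏ d ∈ Icc (f j.castSucc + 1) (f j.succ - 1),
        (1 - ((j + 1 : ℕ) : ℝ) * μ0 / (d : ℝ)) := by
  have succ_sub_one (j : Fin n) : j.succ - 1 = j.castSucc := by
    rw [← Fin.coeSucc_eq_succ, add_sub_cancel_right]
  rw [cloneWaitFactor, prod_filter, Fin.prod_univ_succ]
  simp [succ_sub_one]

theorem cloneGrowthFactor_eq (μ0 : ℝ) (m : ℕ) (f : Fin (m + 2) → ℕ) :
    cloneGrowthFactor μ0 (m + 1) f =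
      ∏ j : Fin m, ((j + 1 : ℕ) : ℝ) * μ0 / (f j.succ.castSucc : ℝ) := by
  rw [cloneGrowthFactor, prod_filter, Fin.prod_univ_castSucc, Fin.prod_univ_succ]
  simp

theorem cloneWaitFactor_snoc (μ0 : ℝ) (n : ℕ) (g : Fin (n + 1) → ℕ) (c : ℕ) :
    cloneWaitFactor μ0 (n + 1) (Fin.snoc g c) = cloneWaitFactor μ0 n g *
      ∏ d ∈ Icc (g (Fin.last n) + 1) (c - 1),
        (1 - ((n + 1 : ℕ) : ℝ) * μ0 / (d : ℝ)) := by
  rw [cloneWaitFactor_eq, cloneWaitFactor_eq, Fin.prod_univ_castSucc]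
  simp [← Fin.castSucc_succ]

theorem cloneGrowthFactor_snoc (μ0 : ℝ) (m : ℕ) (g : Fin (m + 2) → ℕ) (c : ℕ) :
    cloneGrowthFactor μ0 (m + 2) (Fin.snoc g c)
      = cloneGrowthFactor μ0 (m + 1) g *
          (((m + 1 : ℕ) : ℝ) * μ0 / (g (Fin.last (m + 1)) : ℝ)) := by
  rw [cloneGrowthFactor_eq, cloneGrowthFactor_eq, Fin.prod_univ_castSucc]
  simp [← Fin.castSucc_succ]

theorem cloneWeight_snoc_succ_of_lt (μ0 : ℝ) (m : ℕ) (g : Fin (m + 2) → ℕ) {c : ℕ}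
    (hc : g (Fin.last (m + 1)) < c) :
    cloneWeight μ0 (m + 2) (Fin.snoc g (c + 1))
      = cloneWeight μ0 (m + 2) (Fin.snoc g c) * (1 - ((m + 2 : ℕ) : ℝ) * μ0 / (c : ℝ)) := by
  obtain ⟨c, rfl⟩ : ∃ c', c = c' + 1 := ⟨c - 1, by omega⟩
  simp only [cloneWeight, cloneWaitFactor_snoc, cloneGrowthFactor_snoc, Nat.add_sub_cancel,
    prod_Icc_succ_top (show g (Fin.last (m + 1)) + 1 ≤ c + 1 by omega)]
  ring

theorem cloneWeight_snoc_succ_of_eq (μ0 : ℝ) (m : ℕ) (g : Fin (m + 2) → ℕ) {c : ℕ}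
    (hc : g (Fin.last (m + 1)) = c) :
    cloneWeight μ0 (m + 2) (Fin.snoc g (c + 1))
      = cloneWeight μ0 (m + 1) g * (((m + 1 : ℕ) : ℝ) * μ0 / (c : ℝ)) := by
  simp only [cloneWeight, cloneWaitFactor_snoc, cloneGrowthFactor_snoc, hc, Nat.add_sub_cancel,
    Icc_eq_empty_of_lt (Nat.lt_succ_self c), prod_empty]
  ring

theorem clone_size_recurrence_general (μ0 : ℝ) (i : ℕ) :
    ∀ n, 2 ≤ n → ∀ k, i + 2 ≤ k →
      clonePstat μ0 i k n
        = clonePstat μ0 i (k - 1) n * (1 - (n : ℝ) * μ0 / ((k : ℝ) - 1))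
          + clonePstat μ0 i (k - 1) (n - 1) * (((n : ℝ) - 1) * μ0 / ((k : ℝ) - 1)) := by
  intro n hn k _
  obtain ⟨m, rfl⟩ : ∃ m, n = m + 2 := ⟨n - 2, by omega⟩
  obtain ⟨K, rfl⟩ : ∃ K, k = K + 1 := ⟨k - 1, by omega⟩
  have hK : ((K + 1 : ℕ) : ℝ) - 1 = K := by push_cast; ring
  rw [clonePstat_eq_sum, sum_cloneSeqs_succ,
    ← sum_filter_add_sum_filter_not _ (fun g => g (Fin.last (m + 1)) < K),
    filter_clonePrefixes_succ_lt, filter_clonePrefixes_succ_not_lt, Nat.add_sub_cancel,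
    show m + 2 - 1 = m + 1 from rfl, hK, clonePstat_eq_sum, clonePstat_eq_sum, sum_mul, sum_mul]
  congr 1
  · rw [sum_cloneSeqs_succ]
    exact sum_congr rfl fun g hg =>
      cloneWeight_snoc_succ_of_lt μ0 m g (mem_clonePrefixes.1 hg).2.2
  · refine sum_congr rfl fun g hg => ?_
    rw [cloneWeight_snoc_succ_of_eq μ0 m g (mem_cloneSeqs.1 hg).2.2]
    push_cast
    ring

/-- the clone-size probabilities satisfy the recurrence
`P(i,k,n) = P(i,k-1,n)(1 - nμ0/(k-1)) + P(i,k-1,n-1)((n-1)μ0/(k-1))`. -/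
theorem clone_size_recurrence (μ0 : ℝ) (hμ0 : 0 ≤ μ0) (hμ0' : μ0 ≤ 1)
    (i : ℕ) (hi : 1 ≤ i) :
    ∀ n, 2 ≤ n → ∀ k, i + 2 ≤ k →
      clonePstat μ0 i k n
        = clonePstat μ0 i (k - 1) n * (1 - (n : ℝ) * μ0 / ((k : ℝ) - 1))
          + clonePstat μ0 i (k - 1) (n - 1) * (((n : ℝ) - 1) * μ0 / ((k : ℝ) - 1)) :=
  clone_size_recurrence_general μ0 i
end

section
/- Let a, b, c be nonnegative reals with a + b + c = 1. For n ≥ 0 define v_n = ∑_{x=0}^{⌊n/2⌋} n!/(x!·x!·(n−2x)!) · a^x · b^{n−2x} · c^{x}. Then for every real t with 0 < t and t·(b + 2·√(a·c)) < 1, the series ∑_{n=0}^∞ v_n·t^n converges (HasSum) to (1/(1 − b·t)) · (1 − 4·a·c·t²/(1 − b·t)²)^{−1/2}. -/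
/-!
Write `s = b t` and `u = a c t²`, so that `v n * t ^ n = ∑_{2x+m=n} (2x+m)!/(x! x! m!) uˣ sᵐ`.
All terms are nonnegative, so the double series may be summed in any order. Summing over `m`
first gives `C(2x,x) uˣ / (1-s)^(2x+1)` by the negative binomial series, and what remains is a
series in `w = u/(1-s)²` which is the binomial series of `(1-4w)^(-1/2)`: its coefficients are
`multichoose (1/2) x * 4ˣ = C(2x,x)`.
-/

open Finset Nat

theorem ascPochhammer_eval_half_mul_four_pow_mul_factorial (n : ℕ) :
    (ascPochhammer ℝ n).eval (1 / 2) * 4 ^ n * n ! = (2 * n)! := by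
  induction n with
  | zero => simp
  | succ n ih =>
    rw [ascPochhammer_succ_eval, show 2 * (n + 1) = 2 * n + 1 + 1 by ring, factorial_succ,
      factorial_succ, factorial_succ]
    push_cast
    rw [← ih]
    ring

theorem multichoose_half_mul_four_pow (n : ℕ) :
    Ring.multichoose (1 / 2 : ℝ) n * 4 ^ n = centralBinom n := by
  have h := Ring.factorial_nsmul_multichoose_eq_ascPochhammer (1 / 2 : ℝ) n
  rw [Polynomial.ascPochhammer_smeval_eq_eval, nsmul_eq_mul] at h
  rw [centralBinom_eq_two_mul_choose, cast_choose ℝ (by omega), show 2 * n - n = n by omega,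
    ← ascPochhammer_eval_half_mul_four_pow_mul_factorial, ← h]
  field_simp

theorem hasSum_centralBinom_mul_pow {w : ℝ} (hw : ‖4 * w‖ < 1) :
    HasSum (fun n ↦ (centralBinom n : ℝ) * w ^ n) ((1 - 4 * w) ^ (-(1 / 2 : ℝ))) := by
  have h := (Real.one_div_one_sub_rpow_hasFPowerSeriesOnBall_zero (1 / 2)).hasSum (y := 4 * w)
    (by rwa [mem_eball_zero_iff, enorm_eq_nnnorm, ENNReal.coe_lt_one_iff, ← NNReal.coe_lt_coe,
      coe_nnnorm])
  rw [zero_add] at h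
  rw [Real.rpow_neg (by linarith [Real.le_norm_self (4 * w)]), ← one_div]
  refine h.congr_fun fun n ↦ ?_
  rw [FormalMultilinearSeries.ofScalars_apply_eq, smul_eq_mul, ← Ring.multichoose_eq,
    ← multichoose_half_mul_four_pow, mul_pow, mul_assoc]

theorem hasSum_prod_of_nonneg {β γ : Type*} {f : β × γ → ℝ} {g : β → ℝ} {a : ℝ} (hf : 0 ≤ f)
    (hfg : ∀ b, HasSum (fun c ↦ f (b, c)) (g b)) (hg : HasSum g a) : HasSum f a := by
  have hsum : Summable f :=
    (summable_prod_of_nonneg hf).2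
      ⟨fun b ↦ (hfg b).summable, hg.summable.congr fun b ↦ (hfg b).tsum_eq.symm⟩
  exact (hsum.hasSum.prod_fiberwise hfg).unique hg ▸ hsum.hasSum

def twoMulAddEquiv : ℕ × ℕ ≃ Σ n : ℕ, Fin (n / 2 + 1) where
  toFun p := ⟨2 * p.1 + p.2, ⟨p.1, by omega⟩⟩
  invFun q := (q.2, q.1 - 2 * q.2)
  left_inv p := Prod.ext rfl (by simp only; omega)
  right_inv := by
    rintro ⟨n, x⟩
    have h : 2 * x.1 + (n - 2 * x.1) = n := by omega
    exact Sigma.ext h ((Fin.heq_ext_iff (by simp only [h])).2 rfl)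

theorem HasSum.sum_fiber_two_mul_add {α : Type*} [AddCommMonoid α] [TopologicalSpace α]
    [ContinuousAdd α] [RegularSpace α] {f : ℕ × ℕ → α} {a : α} (h : HasSum f a) :
    HasSum (fun n ↦ ∑ x ∈ range (n / 2 + 1), f (x, n - 2 * x)) a := by
  refine ((twoMulAddEquiv.symm.hasSum_iff).2 h).sigma fun n ↦ ?_
  rw [← Fin.sum_univ_eq_sum_range (fun x ↦ f (x, n - 2 * x))]
  exact hasSum_fintype _

theorem factorial_div_eq_choose_mul_centralBinom (x m : ℕ) :
    ((2 * x + m)! : ℝ) / (x ! * x ! * m !) = (m + 2 * x).choose (2 * x) * centralBinom x := by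
  rw [centralBinom_eq_two_mul_choose, cast_choose ℝ (by omega : 2 * x ≤ m + 2 * x),
    cast_choose ℝ (by omega : x ≤ 2 * x), show m + 2 * x - 2 * x = m by omega,
    show 2 * x - x = x by omega, add_comm m]
  field_simp

theorem hasSum_trinomial_mul_pow_right (x : ℕ) (u : ℝ) {s : ℝ} (hs : ‖s‖ < 1) :
    HasSum (fun m ↦ ((2 * x + m)! : ℝ) / (x ! * x ! * m !) * u ^ x * s ^ m)
      (centralBinom x * u ^ x / (1 - s) ^ (2 * x + 1)) := by
  have h := (hasSum_choose_mul_geometric_of_norm_lt_one (2 * x) hs).mul_left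
    (centralBinom x * u ^ x)
  rw [mul_one_div] at h
  refine h.congr_fun fun m ↦ ?_
  rw [factorial_div_eq_choose_mul_centralBinom]
  ring

theorem hasSum_centralBinom_mul_pow_div_pow {s u : ℝ} (hs : s ≠ 1)
    (hsu : ‖4 * u‖ < (1 - s) ^ 2) :
    HasSum (fun x ↦ centralBinom x * u ^ x / (1 - s) ^ (2 * x + 1))
      (1 / (1 - s) * (1 - 4 * u / (1 - s) ^ 2) ^ (-(1 / 2 : ℝ))) := by
  have hs' : 0 < (1 - s) ^ 2 := sq_pos_of_ne_zero (sub_ne_zero.2 hs.symm)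
  have hw : ‖4 * (u / (1 - s) ^ 2)‖ < 1 := by
    rwa [← mul_div_assoc, norm_div, Real.norm_of_nonneg hs'.le, div_lt_one hs']
  rw [mul_div_assoc 4 u]
  refine ((hasSum_centralBinom_mul_pow hw).mul_left (1 / (1 - s))).congr_fun fun x ↦ ?_
  rw [div_pow, ← pow_mul, pow_succ]
  field_simp

theorem hasSum_trinomial_series {s u : ℝ} (hs : 0 ≤ s) (hu : 0 ≤ u) (hsu : s + 2 * √u < 1) :
    HasSum (fun n ↦ ∑ x ∈ range (n / 2 + 1),
        (n ! : ℝ) / (x ! * x ! * (n - 2 * x)!) * u ^ x * s ^ (n - 2 * x))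
      (1 / (1 - s) * (1 - 4 * u / (1 - s) ^ 2) ^ (-(1 / 2 : ℝ))) := by
  have hs1 : s < 1 := by linarith [Real.sqrt_nonneg u]
  have h4u : ‖4 * u‖ < (1 - s) ^ 2 := by
    have h2 : (2 * √u) ^ 2 = 4 * u := by rw [mul_pow, Real.sq_sqrt hu]; norm_num
    rw [Real.norm_of_nonneg (by positivity), ← h2]
    exact pow_lt_pow_left₀ (by linarith) (by positivity) two_ne_zero
  have hsum := hasSum_prod_of_nonneg (f := fun p : ℕ × ℕ ↦
      ((2 * p.1 + p.2)! : ℝ) / (p.1 ! * p.1 ! * p.2 !) * u ^ p.1 * s ^ p.2)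
    (fun p ↦ by positivity)
    (fun x ↦ hasSum_trinomial_mul_pow_right x u (by rwa [Real.norm_of_nonneg hs]))
    (hasSum_centralBinom_mul_pow_div_pow hs1.ne h4u)
  refine hsum.sum_fiber_two_mul_add.congr_fun fun n ↦ sum_congr rfl fun x hx ↦ ?_
  rw [show 2 * x + (n - 2 * x) = n by rw [mem_range] at hx; omega]

theorem unrestricted_walk_return_gf_general (a b c : ℝ)
    (ha : 0 ≤ a) (hb : 0 ≤ b) (hc : 0 ≤ c)
    (v : ℕ → ℝ)
    (hv : ∀ n, v n = ∑ x ∈ Finset.range (n / 2 + 1),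
      (n.factorial : ℝ) / ((x.factorial : ℝ) * (x.factorial : ℝ) *
          ((n - 2 * x).factorial : ℝ)) *
        a ^ x * b ^ (n - 2 * x) * c ^ x)
    (t : ℝ) (ht : 0 < t) (ht1 : t * (b + 2 * Real.sqrt (a * c)) < 1) :
    HasSum (fun n : ℕ => v n * t ^ n)
      ((1 / (1 - b * t)) *
        (1 - 4 * a * c * t ^ 2 / (1 - b * t) ^ 2) ^ (-(1 : ℝ) / 2)) := by
  have hsqrt : √(a * c * t ^ 2) = √(a * c) * t := by
    rw [Real.sqrt_mul (by positivity), Real.sqrt_sq ht.le]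
  have h := hasSum_trinomial_series (s := b * t) (u := a * c * t ^ 2) (by positivity)
    (by positivity) (by rw [hsqrt]; linarith)
  rw [show 4 * a * c * t ^ 2 = 4 * (a * c * t ^ 2) by ring, neg_div]
  refine h.congr_fun fun n ↦ ?_
  rw [hv, sum_mul]
  refine sum_congr rfl fun x hx ↦ ?_
  obtain ⟨m, rfl⟩ := Nat.exists_eq_add_of_le (show 2 * x ≤ n by rw [mem_range] at hx; omega)
  rw [Nat.add_sub_cancel_left, pow_add, mul_pow, mul_pow, mul_pow, ← pow_mul]
  ring

/-- the generating function of `v_n`, the probability that an unrestricted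
`(a,b,c)`-random walk started at height `0` is at height `0` after `n` steps. -/
theorem unrestricted_walk_return_gf (a b c : ℝ)
    (ha : 0 ≤ a) (hb : 0 ≤ b) (hc : 0 ≤ c) (habc : a + b + c = 1)
    (v : ℕ → ℝ)
    (hv : ∀ n, v n = ∑ x ∈ Finset.range (n / 2 + 1),
      (n.factorial : ℝ) / ((x.factorial : ℝ) * (x.factorial : ℝ) *
          ((n - 2 * x).factorial : ℝ)) *
        a ^ x * b ^ (n - 2 * x) * c ^ x)
    (t : ℝ) (ht : 0 < t) (ht1 : t * (b + 2 * Real.sqrt (a * c)) < 1) :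
    HasSum (fun n : ℕ => v n * t ^ n)
      ((1 / (1 - b * t)) *
        (1 - 4 * a * c * t ^ 2 / (1 - b * t) ^ 2) ^ (-(1 : ℝ) / 2)) :=
  unrestricted_walk_return_gf_general a b c ha hb hc v hv t ht ht1
end
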